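/- arXiv:2405.15015 — 4 statements merged into one kernel-verified Lean document; each statement's English description precedes it below -/
import Mathlib

section
/- Let T be a finite set of transactions and O a set of objects, with an access map acc : T → Finset O. For an object o, let load(o) denote the number of transactions t ∈ T with o ∈ acc(t), and let l be the maximum of load(o) over all objects o accessed by some transaction. Then every valid schedule σ : T → ℕ (i.e., every function assigning time steps to transactions such that any two distinct transactions whose access sets intersect receive distinct time steps) uses at least l distinct time-step values; formally, the cardinality of the image of σ is at least l. -/
/-- **Lower bound (Lemma IV.1).** Every valid schedule (a function assigning time steps to
transactions such that distinct conflicting transactions get distinct time steps) uses at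
least `l` distinct time-step values, where `l` is the maximum number of transactions
accessing any single object. -/
theorem schedule_lower_bound {T O : Type} [Fintype T] [DecidableEq T] [DecidableEq O]
    (acc : T → Finset O) (l : ℕ)
    (hl_attained : ∃ o : O, (∃ t : T, o ∈ acc t) ∧
      (Finset.univ.filter (fun t : T => o ∈ acc t)).card = l)
    (hl_max : ∀ o : O, (∃ t : T, o ∈ acc t) →
      (Finset.univ.filter (fun t : T => o ∈ acc t)).card ≤ l)
    (σ : T → ℕ)
    (hσ : ∀ t t' : T, t ≠ t' → (acc t ∩ acc t').Nonempty → σ t ≠ σ t') :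
    l ≤ (Finset.univ.image σ).card := by
  obtain ⟨o, _, hcard⟩ := hl_attained
  rw [← hcard]
  have hinj : Set.InjOn σ ↑(Finset.univ.filter (fun t : T => o ∈ acc t)) := by
    intro a ha b hb hab
    simp only [Finset.coe_filter, Set.mem_setOf_eq] at ha hb
    by_contra hne
    exact hσ a b hne ⟨o, Finset.mem_inter.mpr ⟨ha.2, hb.2⟩⟩ hab
  calc (Finset.univ.filter (fun t : T => o ∈ acc t)).card
      = ((Finset.univ.filter (fun t : T => o ∈ acc t)).image σ).card :=
        (Finset.card_image_of_injOn hinj).symm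
    _ ≤ (Finset.univ.image σ).card :=
        Finset.card_le_card (Finset.image_subset_image (Finset.subset_univ _))
end

section
/- Let T be a finite set of transactions and O a set of objects, with an access map acc : T → Finset O such that |acc(t)| ≤ k for every transaction t. Let l ≥ 1 be the maximum, over objects o, of load(o), and assume load(o) ≤ l for all o. Then: (i) there exists a valid schedule σ : T → ℕ whose image has cardinality at most k·l + 1, and k·l + 1 ≤ (k + 1)·l; and (ii) every valid schedule has image of cardinality at least l. Consequently, the minimum number of time slots over all valid schedules lies between l and (k + 1)·l, i.e., the greedy-coloring schedule is a (k + 1)-factor approximation of the optimal number of time slots. -/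
lemma neighbors_card_le {T O : Type} [Fintype T] [DecidableEq T] [DecidableEq O]
    (acc : T → Finset O) (k l : ℕ)
    (hk : ∀ t : T, (acc t).card ≤ k)
    (hl_max : ∀ o : O, (Finset.univ.filter (fun t : T => o ∈ acc t)).card ≤ l)
    (t : T) :
    (Finset.univ.filter (fun t' : T => (acc t ∩ acc t').Nonempty)).card ≤ k * l := by
  have hsub : (Finset.univ.filter (fun t' : T => (acc t ∩ acc t').Nonempty)) ⊆
      (acc t).biUnion (fun o => Finset.univ.filter (fun t' : T => o ∈ acc t')) := by
    intro x hx
    simp only [Finset.mem_filter, Finset.mem_univ, true_and] at hx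
    obtain ⟨o, ho⟩ := hx
    simp only [Finset.mem_inter] at ho
    exact Finset.mem_biUnion.2 ⟨o, ho.1, by simp [ho.2]⟩
  calc _ ≤ ((acc t).biUnion (fun o => Finset.univ.filter (fun t' : T => o ∈ acc t'))).card :=
        Finset.card_le_card hsub
    _ ≤ ∑ o ∈ acc t, (Finset.univ.filter (fun t' : T => o ∈ acc t')).card :=
        Finset.card_biUnion_le
    _ ≤ ∑ _o ∈ acc t, l := Finset.sum_le_sum (fun o _ => hl_max o)
    _ = (acc t).card * l := by simp [Finset.sum_const, mul_comm]
    _ ≤ k * l := Nat.mul_le_mul_right l (hk t)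

lemma greedy_exists {T O : Type} [Fintype T] [DecidableEq T] [DecidableEq O]
    (acc : T → Finset O) (k l : ℕ)
    (hk : ∀ t : T, (acc t).card ≤ k)
    (hl_max : ∀ o : O, (Finset.univ.filter (fun t : T => o ∈ acc t)).card ≤ l)
    (s : Finset T) :
    ∃ σ : T → ℕ, (∀ t, σ t < k * l + 1) ∧
      (∀ t ∈ s, ∀ t' ∈ s, t ≠ t' → (acc t ∩ acc t').Nonempty → σ t ≠ σ t') := by
  classical
  induction s using Finset.induction_on with
  | empty => exact ⟨fun _ => 0, fun _ => Nat.succ_pos _, by simp⟩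
  | @insert a s ha ih =>
    obtain ⟨σ, hσlt, hσ⟩ := ih
    set N := Finset.univ.filter (fun t' : T => (acc a ∩ acc t').Nonempty) with hN
    have hused : ((N ∩ s).image σ).card ≤ k * l := by
      calc ((N ∩ s).image σ).card ≤ (N ∩ s).card := Finset.card_image_le
        _ ≤ N.card := Finset.card_le_card (Finset.inter_subset_left)
        _ ≤ k * l := neighbors_card_le acc k l hk hl_max a
    have hne : (Finset.range (k * l + 1) \ ((N ∩ s).image σ)).Nonempty := by
      apply Finset.sdiff_nonempty.2
      intro hsub
      have := Finset.card_le_card hsub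
      simp only [Finset.card_range] at this
      omega
    obtain ⟨c, hc⟩ := hne
    simp only [Finset.mem_sdiff, Finset.mem_range] at hc
    refine ⟨Function.update σ a c, ?_, ?_⟩
    · intro t
      by_cases h : t = a
      · subst h; simpa using hc.1
      · simp [Function.update_of_ne h, hσlt]
    · intro t ht t' ht' hne' hconf
      rcases Finset.mem_insert.1 ht with rfl | hts
      all_goals rcases Finset.mem_insert.1 ht' with rfl | ht's
      · exact absurd rfl hne'
      · have ht'a : t' ≠ t := fun h => hne' h.symm
        have ht'N : t' ∈ N ∩ s := by
          simp [hN, Finset.mem_inter, Finset.mem_filter, ht's, hconf]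
        simp only [Function.update_self, Function.update_of_ne ht'a]
        intro h
        exact hc.2 (Finset.mem_image.2 ⟨t', ht'N, h.symm⟩)
      · have hta : t ≠ t' := hne'
        have htN : t ∈ N ∩ s := by
          have h2 : (acc t' ∩ acc t).Nonempty := by
            rw [Finset.inter_comm]; exact hconf
          simp [hN, Finset.mem_inter, Finset.mem_filter, hts, h2]
        simp only [Function.update_self, Function.update_of_ne hne']
        intro h
        exact hc.2 (Finset.mem_image.2 ⟨t, htN, h⟩)
      · have h1 : t ≠ a := fun h => ha (h ▸ hts)
        have h2 : t' ≠ a := fun h => ha (h ▸ ht's)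
        simpa [Function.update_of_ne h1, Function.update_of_ne h2] using
          hσ t hts t' ht's hne' hconf

/-- **Theorem IV.3 / Corollary IV.4 (combinatorial content).** If each transaction
accesses at most `k` objects and `l ≥ 1` is the maximum number of transactions accessing
any single object, then (i) there is a valid schedule whose image has at most
`k * l + 1 ≤ (k + 1) * l` time slots, and (ii) every valid schedule uses at least `l`
time slots; hence the greedy-coloring schedule is a `(k + 1)`-factor approximation of
the optimal number of time slots. -/
theorem schedule_approximation {T O : Type} [Fintype T] [DecidableEq T] [DecidableEq O]
    (acc : T → Finset O) (k l : ℕ) (hl1 : 1 ≤ l)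
    (hk : ∀ t : T, (acc t).card ≤ k)
    (hl_max : ∀ o : O, (Finset.univ.filter (fun t : T => o ∈ acc t)).card ≤ l)
    (hl_attained : ∃ o : O, (Finset.univ.filter (fun t : T => o ∈ acc t)).card = l) :
    ((∃ σ : T → ℕ,
        (∀ t t' : T, t ≠ t' → (acc t ∩ acc t').Nonempty → σ t ≠ σ t') ∧
        (Finset.univ.image σ).card ≤ k * l + 1) ∧
      k * l + 1 ≤ (k + 1) * l) ∧
    (∀ σ : T → ℕ,
      (∀ t t' : T, t ≠ t' → (acc t ∩ acc t').Nonempty → σ t ≠ σ t') →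
      l ≤ (Finset.univ.image σ).card) := by
  refine ⟨⟨?_, by nlinarith⟩, ?_⟩
  · obtain ⟨σ, hlt, hval⟩ := greedy_exists acc k l hk hl_max Finset.univ
    refine ⟨σ, fun t t' h hc => hval t (Finset.mem_univ t) t' (Finset.mem_univ t') h hc, ?_⟩
    have : Finset.univ.image σ ⊆ Finset.range (k * l + 1) := by
      intro x hx
      obtain ⟨t, _, rfl⟩ := Finset.mem_image.1 hx
      exact Finset.mem_range.2 (hlt t)
    simpa using Finset.card_le_card this
  · intro σ hval
    obtain ⟨o, ho⟩ := hl_attained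
    set S := Finset.univ.filter (fun t : T => o ∈ acc t) with hS
    have hinj : Set.InjOn σ S := by
      intro t ht t' ht' h
      by_contra hne
      refine hval t t' hne ⟨o, Finset.mem_inter.2 ⟨?_, ?_⟩⟩ h
      · exact (Finset.mem_filter.1 ht).2
      · exact (Finset.mem_filter.1 ht').2
    calc l = S.card := ho.symm
      _ = (S.image σ).card := (Finset.card_image_of_injOn hinj).symm
      _ ≤ (Finset.univ.image σ).card :=
        Finset.card_le_card (Finset.image_subset_image (Finset.subset_univ S))
end

section
/- Let s, k be natural numbers with 1 ≤ k ≤ s and s ≥ 2. Let (Ω, P) be a probability space and let A₀, …, A_{s−1} : Ω → Finset (Fin s) be mutually independent random variables such that each A_i is uniformly distributed over the k-element subsets of Fin s. For an element z ∈ Fin s, let L_z(ω) = |{i : z ∈ A_i(ω)}| be the number of indices i whose random subset contains z, and let L(ω) = max_z L_z(ω). Then P({ω : L(ω) > 2k + 4·ln s}) ≤ 1/s; equivalently, with probability at least 1 − 1/s, every element z is contained in at most 2k + 4·ln s of the random subsets. -/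
open MeasureTheory ProbabilityTheory
open scoped ENNReal

/-- `Finset (Fin s)` carries the discrete σ-algebra. -/
instance (s : ℕ) : MeasurableSpace (Finset (Fin s)) := ⊤

/-! For a fixed object `z`, the events `z ∈ A i` are independent and each has probability `k / s`,
so the load `L_z` is a sum of independent Bernoulli variables with mean `k`. The Chernoff bound
at `t = 1` gives `P(L_z ≥ a) ≤ exp((e - 1) k - a)`, which for `a = 2k + 4 ln s` is at most
`exp(-4 ln s) ≤ s⁻²` because `e < 3`. A union bound over the `s` objects gives `1 / s`. -/

open Finset Real

namespace Finset
variable {α : Type*} [Fintype α] [DecidableEq α]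

lemma card_filter_mem_powersetCard_univ_mul (k : ℕ) (z : α) :
    #{B ∈ powersetCard k univ | z ∈ B} * Fintype.card α = k * (Fintype.card α).choose k := by
  obtain ⟨m, hm⟩ := Nat.exists_eq_add_one.2 (Fintype.card_pos_iff.2 ⟨z⟩)
  rcases k with _ | j
  · simp
  simp_rw [← singleton_subset_iff (a := z)]
  rw [card_filter_powersetCard_subset _ _ _ (subset_univ _) (by simp)]
  simp only [card_singleton, card_univ, hm, add_tsub_cancel_right]
  rw [mul_comm, Nat.add_one_mul_choose_eq, mul_comm]

end Finset

namespace PMF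
variable {α : Type*} [Fintype α] [DecidableEq α] [MeasurableSpace (Finset α)]
  [DiscreteMeasurableSpace (Finset α)]

lemma toMeasure_uniformOfFinset_card_eq_setOf_mem {k : ℕ}
    (hne : (univ.filter fun B : Finset α ↦ #B = k).Nonempty) (z : α) :
    (uniformOfFinset _ hne).toMeasure {B | z ∈ B} = k / Fintype.card α := by
  have hk : k ≤ Fintype.card α := by
    obtain ⟨B, hB⟩ := hne
    exact (mem_filter.1 hB).2 ▸ card_le_univ B
  rw [toMeasure_uniformOfFinset_apply _ _ (.of_discrete), ← powerset_univ,
    ← powersetCard_eq_filter, card_powersetCard, card_univ,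
    ENNReal.div_eq_div_iff (by exact_mod_cast (Fintype.card_pos_iff.2 ⟨z⟩).ne') (by simp)
      (by exact_mod_cast (Nat.choose_pos hk).ne') (by simp), mul_comm, mul_comm _ (k : ℝ≥0∞)]
  norm_cast
  convert card_filter_mem_powersetCard_univ_mul k z using 4
  exact Iff.rfl

end PMF

namespace MeasureTheory

lemma measure_lt_sup_le_sum {ι Ω : Type*} [Fintype ι] [Nonempty ι] [MeasurableSpace Ω]
    (μ : Measure Ω) (f : ι → Ω → ℕ) (a : ℝ) :
    μ {ω | a < ((univ.sup fun i ↦ f i ω : ℕ) : ℝ)} ≤ ∑ i, μ {ω | a < f i ω} := by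
  refine (measure_mono fun ω hω ↦ ?_).trans (measure_iUnion_fintype_le μ _)
  obtain ⟨i, -, hi⟩ := exists_mem_eq_sup univ univ_nonempty fun i ↦ f i ω
  exact Set.mem_iUnion.2 ⟨i, by simpa [hi] using hω⟩

end MeasureTheory

namespace ProbabilityTheory

variable {Ω ι : Type*} [MeasurableSpace Ω] {μ : Measure Ω} [IsProbabilityMeasure μ]

lemma mgf_indicator_one {E : Set Ω} (hE : NullMeasurableSet E μ) :
    mgf (E.indicator 1) μ 1 = 1 + (exp 1 - 1) * μ.real E := by
  have hint : Integrable (E.indicator (1 : Ω → ℝ)) μ := (integrable_const 1).indicator₀ hE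
  have hexp : ∀ ω, exp (E.indicator 1 ω) = 1 + (exp 1 - 1) * E.indicator 1 ω := fun ω ↦ by
    by_cases h : ω ∈ E <;> simp [h]
  simp only [mgf, one_mul, hexp]
  rw [integral_add (integrable_const 1) (hint.const_mul _), integral_const_mul,
    integral_indicator₀ hE]
  simp

lemma measureReal_sum_indicator_ge_le_exp [Fintype ι] {E : ι → Set Ω}
    (hindep : iIndepFun (fun i ↦ (E i).indicator (1 : Ω → ℝ)) μ)
    (hE : ∀ i, NullMeasurableSet (E i) μ) (a : ℝ) :
    μ.real {ω | a ≤ ∑ i, (E i).indicator 1 ω} ≤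
      exp ((exp 1 - 1) * ∑ i, μ.real (E i) - a) := by
  have hmeas : ∀ i, AEMeasurable ((E i).indicator (1 : Ω → ℝ)) μ :=
    fun i ↦ aemeasurable_const.indicator₀ (hE i)
  have hbound : ∀ ω, ∑ i, (E i).indicator 1 ω ≤ (Fintype.card ι : ℝ) := fun ω ↦ by
    simpa using Finset.sum_le_sum fun i (_ : i ∈ univ) ↦
      Set.indicator_apply_le' (fun _ ↦ le_rfl) (fun _ ↦ zero_le_one) (s := E i)
        (f := (1 : Ω → ℝ)) (a := ω)
  have hint : Integrable (fun ω ↦ exp (1 * (∑ i, (E i).indicator 1) ω)) μ := by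
    refine .of_bound (by fun_prop) (exp (Fintype.card ι)) (.of_forall fun ω ↦ ?_)
    simpa [abs_exp] using hbound ω
  calc μ.real {ω | a ≤ ∑ i, (E i).indicator 1 ω}
      ≤ exp (-1 * a) * mgf (∑ i, (E i).indicator 1) μ 1 := by
        simpa using measure_ge_le_exp_mul_mgf a zero_le_one hint
    _ = exp (-a) * ∏ i, (1 + (exp 1 - 1) * μ.real (E i)) := by
        rw [hindep.mgf_sum₀ hmeas, neg_one_mul]
        simp only [mgf_indicator_one (hE _)]
    _ ≤ exp (-a) * ∏ i, exp ((exp 1 - 1) * μ.real (E i)) := by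
        gcongr
        · intro i _
          have : 0 ≤ exp 1 - 1 := sub_nonneg.2 (one_le_exp zero_le_one)
          positivity
        · rw [add_comm]; exact add_one_le_exp _
    _ = exp ((exp 1 - 1) * ∑ i, μ.real (E i) - a) := by
        rw [← exp_sum, ← exp_add, Finset.mul_sum]; ring_nf

lemma measureReal_card_filter_mem_ge_le_exp {α : Type*} [Fintype ι] [DecidableEq α]
    [MeasurableSpace (Finset α)] [DiscreteMeasurableSpace (Finset α)]
    {A : ι → Ω → Finset α}
    (hindep : iIndepFun A μ) (hA : ∀ i, AEMeasurable (A i) μ) (z : α) (a : ℝ) :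
    μ.real {ω | a ≤ #{i | z ∈ A i ω}} ≤
      exp ((exp 1 - 1) * ∑ i, μ.real (A i ⁻¹' {B | z ∈ B}) - a) := by
  have hcard (ω : Ω) :
      (#{i | z ∈ A i ω} : ℝ) = ∑ i, (A i ⁻¹' {B | z ∈ B}).indicator 1 ω := by
    simp [Set.indicator_apply, Finset.sum_boole]
  simp only [hcard]
  exact measureReal_sum_indicator_ge_le_exp (E := fun i ↦ A i ⁻¹' {B | z ∈ B})
    (hindep.comp (fun _ ↦ {B | z ∈ B}.indicator 1) fun _ ↦ .of_discrete)
    (fun i ↦ (hA i).nullMeasurableSet_preimage .of_discrete) a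

end ProbabilityTheory

lemma Real.exp_sub_two_mul_add_four_mul_log_le {k x : ℝ} (hk : 0 ≤ k) (hx : 1 ≤ x) :
    exp ((exp 1 - 1) * k - (2 * k + 4 * log x)) ≤ (x ^ 2)⁻¹ := by
  have hlog : 0 ≤ log x := log_nonneg hx
  calc exp ((exp 1 - 1) * k - (2 * k + 4 * log x))
      ≤ exp (-log (x ^ 2)) := by
        rw [log_pow]
        gcongr
        push_cast
        linarith [mul_nonneg hk (sub_nonneg.2 exp_one_lt_three.le)]
    _ = (x ^ 2)⁻¹ := by rw [exp_neg, exp_log (by positivity)]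

lemma sum_measureReal_mem_eq_of_map_eq_uniform {Ω : Type*} [MeasurableSpace Ω] {P : Measure Ω}
    {s k : ℕ} {A : Fin s → Ω → Finset (Fin s)} (hA : ∀ i, AEMeasurable (A i) P)
    (hne : (univ.filter fun B : Finset (Fin s) ↦ #B = k).Nonempty)
    (hunif : ∀ i, P.map (A i) = (PMF.uniformOfFinset _ hne).toMeasure) (z : Fin s) :
    ∑ i, P.real (A i ⁻¹' {B | z ∈ B}) = k := by
  have hs : (s : ℝ) ≠ 0 := by exact_mod_cast (Fin.pos z).ne'
  simp only [← map_measureReal_apply_of_aemeasurable (hA _) .of_discrete, hunif,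
    measureReal_def, PMF.toMeasure_uniformOfFinset_card_eq_setOf_mem, Fintype.card_fin,
    ENNReal.toReal_div, ENNReal.toReal_natCast, sum_const, card_univ, nsmul_eq_mul]
  field_simp

theorem max_object_load_bound_general
    {Ω : Type} [MeasurableSpace Ω] (P : Measure Ω) [IsProbabilityMeasure P]
    (s k : ℕ) (hs : 2 ≤ s)
    (A : Fin s → Ω → Finset (Fin s))
    (hindep : iIndepFun A P)
    (hne : ((Finset.univ : Finset (Finset (Fin s))).filter fun B => B.card = k).Nonempty)
    (hunif : ∀ i : Fin s,
      Measure.map (A i) P = (PMF.uniformOfFinset _ hne).toMeasure) :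
    P {ω : Ω |
        (2 * (k : ℝ) + 4 * Real.log s) <
          ((Finset.univ.sup fun z : Fin s =>
            (Finset.univ.filter fun i : Fin s => z ∈ A i ω).card : ℕ) : ℝ)} ≤
      1 / (s : ℝ≥0∞) := by
  have : Nonempty (Fin s) := ⟨⟨0, by omega⟩⟩
  have hs1 : (1 : ℝ) ≤ s := by exact_mod_cast (by omega : 1 ≤ s)
  have hA : ∀ i, AEMeasurable (A i) P := fun i ↦
    .of_map_ne_zero (by rw [hunif i]; exact IsProbabilityMeasure.ne_zero _)
  have hload (z : Fin s) :
      P {ω | 2 * (k : ℝ) + 4 * log s < #{i | z ∈ A i ω}} ≤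
        ENNReal.ofReal ((s ^ 2 : ℝ)⁻¹) := by
    refine (measure_mono <| Set.ofPred_subset_ofPred.2 fun _ ↦ le_of_lt).trans ?_
    rw [← ofReal_measureReal]
    refine ENNReal.ofReal_le_ofReal <|
      (measureReal_card_filter_mem_ge_le_exp hindep hA z _).trans ?_
    rw [sum_measureReal_mem_eq_of_map_eq_uniform hA hne hunif]
    exact exp_sub_two_mul_add_four_mul_log_le k.cast_nonneg hs1
  calc P _ ≤ ∑ z, P {ω | 2 * (k : ℝ) + 4 * log s < #{i | z ∈ A i ω}} :=
        measure_lt_sup_le_sum P _ _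
    _ ≤ ∑ _ : Fin s, ENNReal.ofReal ((s ^ 2 : ℝ)⁻¹) := sum_le_sum fun z _ ↦ hload z
    _ = 1 / s := by
        rw [sum_const, card_univ, Fintype.card_fin, nsmul_eq_mul, ← ENNReal.ofReal_natCast,
          ← ENNReal.ofReal_mul (by positivity), pow_two, mul_inv, ← mul_assoc,
          mul_inv_cancel₀ (by positivity), one_mul, ENNReal.ofReal_inv_of_pos (by positivity),
          ENNReal.ofReal_natCast, one_div]

/-- **Lemma V.4.** If each of `s` transactions independently chooses a uniformly random
`k`-element subset of the `s` objects to access, then with probability at least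
`1 − 1/s`, every object is accessed by at most `2k + 4·ln s` transactions. -/
theorem max_object_load_bound
    {Ω : Type} [MeasurableSpace Ω] (P : Measure Ω) [IsProbabilityMeasure P]
    (s k : ℕ) (hk1 : 1 ≤ k) (hks : k ≤ s) (hs : 2 ≤ s)
    (A : Fin s → Ω → Finset (Fin s))
    (hindep : iIndepFun A P)
    (hne : ((Finset.univ : Finset (Finset (Fin s))).filter fun B => B.card = k).Nonempty)
    (hunif : ∀ i : Fin s,
      Measure.map (A i) P = (PMF.uniformOfFinset _ hne).toMeasure) :
    P {ω : Ω |
        (2 * (k : ℝ) + 4 * Real.log s) <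
          ((Finset.univ.sup fun z : Fin s =>
            (Finset.univ.filter fun i : Fin s => z ∈ A i ω).card : ℕ) : ℝ)} ≤
      1 / (s : ℝ≥0∞) :=
  max_object_load_bound_general P s k hs A hindep hne hunif
end

section
/- Let l ≥ 1 be a natural number, let pos : Fin l → ℤ be injective, and let p ∈ ℤ. Then the number of indices i with |pos(i) − p| ≥ l/4 is at least l/2 − 1; formally, the cardinality (cast to ℝ) of {i : Fin l | (l : ℝ)/4 ≤ |pos(i) − p|} is at least (l : ℝ)/2 − 1. -/
open Finset

/-- The integers within distance `< r` of `p` lie in `[p - n, p + n]` with `n = ⌈r⌉ - 1`. -/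
theorem Int.card_le_two_mul_add_one_of_abs_sub_lt {s : Finset ℤ} {p : ℤ} {r : ℝ} (hr : 0 ≤ r)
    (hs : ∀ x ∈ s, |(x : ℝ) - p| < r) : (#s : ℝ) ≤ 2 * r + 1 := by
  set n := ⌈r⌉ - 1
  have hsub : s ⊆ Icc (p - n) (p + n) := by
    intro x hx
    have hlt : |x - p| < ⌈r⌉ := Int.lt_ceil.mpr (by exact_mod_cast hs x hx)
    rw [mem_Icc]
    rw [abs_lt] at hlt
    omega
  -- `max` because `n = -1` when `r = 0`, and then the interval is empty.
  have hcard : ((Icc (p - n) (p + n)).card : ℤ) ≤ max (2 * n + 1) 0 := by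
    rw [Int.card_Icc]
    omega
  have hceil : (n : ℝ) ≤ r := by
    have := Int.ceil_lt_add_one r
    simp only [n, Int.cast_sub, Int.cast_one]
    linarith
  calc (#s : ℝ) ≤ #(Icc (p - n) (p + n)) := by exact_mod_cast card_le_card hsub
    _ ≤ max (2 * n + 1 : ℝ) 0 := by exact_mod_cast hcard
    _ ≤ 2 * r + 1 := max_le (by linarith) (by linarith)

theorem card_sub_two_mul_sub_one_le_ncard_le_abs_sub {ι : Type*} [Fintype ι] {f : ι → ℤ}
    (hf : Function.Injective f) (p : ℤ) {r : ℝ} (hr : 0 ≤ r) :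
    (Fintype.card ι : ℝ) - 2 * r - 1 ≤ {i | r ≤ |(f i : ℝ) - p|}.ncard := by
  classical
  set near := univ.filter fun i => |(f i : ℝ) - p| < r
  have hfar : {i | r ≤ |(f i : ℝ) - p|}.ncard + #near = Fintype.card ι := by
    rw [Set.ncard_eq_toFinset_card', Set.toFinset_ofPred, ← card_univ]
    simpa only [not_le] using
      card_filter_add_card_filter_not (s := (univ : Finset ι)) fun i => r ≤ |(f i : ℝ) - p|
  have hnear : (#near : ℝ) ≤ 2 * r + 1 := by
    rw [← card_image_of_injective near hf]
    refine Int.card_le_two_mul_add_one_of_abs_sub_lt (p := p) hr fun x hx => ?_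
    obtain ⟨i, hi, rfl⟩ := mem_image.mp hx
    exact (mem_filter.mp hi).2
  have hfar' : ({i | r ≤ |(f i : ℝ) - p|}.ncard : ℝ) + #near = Fintype.card ι := by
    exact_mod_cast hfar
  linarith

theorem far_transactions_count_general (l : ℕ) (pos : Fin l → ℤ)
    (hpos : Function.Injective pos) (p : ℤ) :
    (l : ℝ) / 2 - 1 ≤
      (({i : Fin l | (l : ℝ) / 4 ≤ |((pos i : ℤ) : ℝ) - (p : ℝ)|}.ncard : ℝ)) := by
  have h := card_sub_two_mul_sub_one_le_ncard_le_abs_sub hpos p (r := (l : ℝ) / 4) (by positivity)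
  rw [Fintype.card_fin] at h
  linarith

/-- **Geometric core of the line-graph lower bound (Lemma V.8).** If `l ≥ 1` transactions
occupy distinct integer positions on a line and all access an object at position `p`,
then at least `l/2 − 1` of them lie at distance at least `l/4` from `p`. -/
theorem far_transactions_count (l : ℕ) (hl : 1 ≤ l) (pos : Fin l → ℤ)
    (hpos : Function.Injective pos) (p : ℤ) :
    (l : ℝ) / 2 - 1 ≤
      (({i : Fin l | (l : ℝ) / 4 ≤ |((pos i : ℤ) : ℝ) - (p : ℝ)|}.ncard : ℝ)) :=
  far_transactions_count_general l pos hpos p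
end
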